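/- Let p and k be positive integers and let w ∈ {0,1}^{2p} be a non-periodic string. For all binary strings x, y ∈ {0,1}^n with y ∈ B_k(x), the indicator vectors satisfy 1_w(x) ∈ B_{5k}(1_w(y)); that is, 1_w(x) can be obtained from 1_w(y) by at most 5k deletions followed by at most 5k insertions. -/

import Mathlib

/-- `w` has period `a` : `w_i = w_{i+a}` for all `1 ≤ i ≤ ℓ - a` (0-based below). -/
def HasPeriod {ℓ : ℕ} (w : Fin ℓ → Bool) (a : ℕ) : Prop :=
  ∀ i : ℕ, ∀ h : i + a < ℓ,
    w ⟨i, Nat.lt_of_le_of_lt (Nat.le_add_right i a) h⟩ = w ⟨i + a, h⟩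

/-- `w` is non-periodic : it has no period `a` with `1 ≤ a ≤ ⌈ℓ/2⌉ - 1`. -/
def NonPeriodic {ℓ : ℕ} (w : Fin ℓ → Bool) : Prop :=
  ∀ a : ℕ, 1 ≤ a → a ≤ (ℓ + 1) / 2 - 1 → ¬ HasPeriod w a

/-- `x_{i:i+ℓ-1} = w`, where `i : Fin n` is the (0-based) starting position. -/
def matchesAt {n ℓ : ℕ} (x : Fin n → Bool) (w : Fin ℓ → Bool) (i : Fin n) : Prop :=
  ∃ h : i.val + ℓ ≤ n,
    ∀ j : Fin ℓ, x ⟨i.val + j.val, lt_of_lt_of_le (Nat.add_lt_add_left j.isLt _) h⟩ = w j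

-- The indicator vector `1_w(x) ∈ {0,1}^n`.
open Classical in
noncomputable def indVec {n ℓ : ℕ} (x : Fin n → Bool) (w : Fin ℓ → Bool) : Fin n → Bool :=
  fun i => decide (matchesAt x w i)

/-- `u ∈ B_k(v)` : there is a common subsequence `z` of `u` and `v` with
`|v| - |z| ≤ k` and `|u| - |z| ≤ k`. -/
def inEditBall (k : ℕ) {m n : ℕ} (v : Fin m → Bool) (u : Fin n → Bool) : Prop :=
  ∃ z : List Bool, z.Sublist (List.ofFn u) ∧ z.Sublist (List.ofFn v) ∧
    m - z.length ≤ k ∧ n - z.length ≤ k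

namespace Stmt11Aux

lemma count_add (l : List Bool) : l.count true + l.count false = l.length := by
  induction l with
  | nil => rfl
  | cons c t ih => cases c <;> simp [List.count_cons] <;> omega

def indL (wl : List Bool) : List Bool → List Bool
  | [] => []
  | c :: t => (wl.isPrefixOf (c :: t)) :: indL wl t

@[simp] lemma indL_length (wl l : List Bool) : (indL wl l).length = l.length := by
  induction l with
  | nil => rfl
  | cons c t ih => simp [indL, ih]

lemma indL_getElem (wl l : List Bool) (i : ℕ) (h : i < (indL wl l).length) :
    (indL wl l)[i] = wl.isPrefixOf (l.drop i) := by
  induction l generalizing i with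
  | nil => simp [indL] at h
  | cons c t ih =>
    cases i with
    | zero => simp [indL]
    | succ m =>
      have hm : m < (indL wl t).length := by simp at h ⊢; omega
      simpa [indL] using ih m hm

lemma indL_drop (wl l : List Bool) (n : ℕ) : (indL wl l).drop n = indL wl (l.drop n) := by
  induction l generalizing n with
  | nil => simp [indL]
  | cons c t ih =>
    cases n with
    | zero => simp
    | succ m => simpa [indL] using ih m

lemma isPrefixOf_congr {u v₁ v₂ : List Bool} (h : v₁.take u.length = v₂.take u.length) :
    u.isPrefixOf v₁ = u.isPrefixOf v₂ := by
  rw [Bool.eq_iff_iff, List.isPrefixOf_iff_prefix, List.isPrefixOf_iff_prefix,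
      List.prefix_iff_eq_take, List.prefix_iff_eq_take, h]

lemma spacing (p : ℕ) (w : Fin (2*p) → Bool) (hw : NonPeriodic w)
    (s : List Bool) (i j : ℕ) (hij : i < j) (hj2 : j - i < 2*p)
    (hi : List.ofFn w <+: s.drop i) (hj : List.ofFn w <+: s.drop j) :
    p ≤ j - i := by
  by_contra hlt
  push_neg at hlt
  have hp : 0 < p := by omega
  have hwlen : (List.ofFn w).length = 2*p := by simp
  have hilen : i + 2*p ≤ s.length := by
    have := hi.length_le; rw [hwlen, List.length_drop] at this; omega
  have hjlen : j + 2*p ≤ s.length := by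
    have := hj.length_le; rw [hwlen, List.length_drop] at this; omega
  have key : ∀ (t m' u : ℕ) (hm' : m' < 2*p) (hu : u < s.length), t + 2*p ≤ s.length →
      List.ofFn w <+: s.drop t → u = t + m' → w ⟨m', hm'⟩ = s[u]'hu := by
    intro t m' u hm' hu ht hpre hut
    subst hut
    have h1 : (List.ofFn w)[m']'(by omega) = (s.drop t)[m']'(by rw [List.length_drop]; omega) :=
      hpre.getElem (by omega)
    rw [List.getElem_ofFn] at h1
    rw [List.getElem_drop] at h1
    exact h1
  apply hw (j - i) (by omega) (by omega)
  intro m hm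
  have e2 := key j m (j+m) (by omega) (by omega) hjlen hj rfl
  have e3 := key i (m + (j-i)) (j+m) hm (by omega) hilen hi (by omega)
  exact e2.trans e3.symm

lemma count_true_le_two (p : ℕ) (l : List Bool) (hl : l.length ≤ 2*p)
    (hsp : ∀ i j : ℕ, (hi : i < l.length) → (hj : j < l.length) → i < j →
        l[i] = true → l[j] = true → p ≤ j - i) :
    l.count true ≤ 2 := by
  by_contra hc
  push_neg at hc
  have h3 : (List.replicate 3 true).Sublist l :=
    (List.replicate_sublist_iff).mpr (by omega)
  obtain ⟨is, his, hpw⟩ := List.sublist_eq_map_getElem h3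
  have hlen3 : is.length = 3 := by
    have := congrArg List.length his
    simpa using this.symm
  obtain ⟨a, b, c, rfl⟩ : ∃ a b c, is = [a, b, c] := by
    match is, hlen3 with
    | [a, b, c], _ => exact ⟨a, b, c, rfl⟩
  have his' : ([true, true, true] : List Bool) = [l[a], l[b], l[c]] := by simpa using his
  simp only [List.cons.injEq] at his'
  obtain ⟨h1, h2, h3', -⟩ := his'
  simp only [List.pairwise_cons, List.mem_cons] at hpw
  have hab : (a : ℕ) < b := by
    have := hpw.1 b (by simp); exact this
  have hbc : (b : ℕ) < c := by
    have := hpw.2.1 c (by simp); exact this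
  have s1 := hsp a b a.isLt b.isLt hab h1.symm h2.symm
  have s2 := hsp b c b.isLt c.isLt hbc h2.symm h3'.symm
  have := c.isLt
  omega

lemma lcs (v : List Bool) : ∀ z1 z2 : List Bool, z1.Sublist v → z2.Sublist v →
    ∃ z : List Bool, z.Sublist z1 ∧ z.Sublist z2 ∧
      z1.length + z2.length ≤ v.length + z.length := by
  induction v with
  | nil =>
    intro z1 z2 h1 h2
    rw [List.sublist_nil] at h1 h2
    subst h1; subst h2
    exact ⟨[], by simp⟩
  | cons c t ih =>
    intro z1 z2 h1 h2
    cases h1 with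
    | cons _ h1' =>
      cases h2 with
      | cons _ h2' =>
        obtain ⟨z, za, zb, zl⟩ := ih z1 z2 h1' h2'
        exact ⟨z, za, zb, by simp; omega⟩
      | cons_cons _ h2' =>
        obtain ⟨z, za, zb, zl⟩ := ih _ _ h1' h2'
        exact ⟨z, za, zb.cons _, by simp at zl ⊢; omega⟩
    | cons_cons _ h1' =>
      cases h2 with
      | cons _ h2' =>
        obtain ⟨z, za, zb, zl⟩ := ih _ _ h1' h2'
        exact ⟨z, za.cons _, zb, by simp at zl ⊢; omega⟩
      | cons_cons _ h2' =>
        obtain ⟨z, za, zb, zl⟩ := ih _ _ h1' h2'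
        exact ⟨c :: z, za.cons₂ _, zb.cons₂ _, by simp at zl ⊢; omega⟩

def Approx (a b : ℕ) (u v : List Bool) : Prop :=
  ∃ z : List Bool, z.Sublist u ∧ z.Sublist v ∧
    u.length - z.length ≤ a ∧ v.length - z.length ≤ b

lemma approx_mono {a b a' b' : ℕ} {u v : List Bool} (h : Approx a b u v)
    (ha : a ≤ a') (hb : b ≤ b') : Approx a' b' u v := by
  obtain ⟨z, h1, h2, h3, h4⟩ := h
  exact ⟨z, h1, h2, by omega, by omega⟩

lemma approx_symm {a b : ℕ} {u v : List Bool} (h : Approx a b u v) : Approx b a v u := by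
  obtain ⟨z, h1, h2, h3, h4⟩ := h
  exact ⟨z, h2, h1, h4, h3⟩

lemma approx_trans {a b c d : ℕ} {u v w : List Bool}
    (h1 : Approx a b u v) (h2 : Approx c d v w) : Approx (a + c) (b + d) u w := by
  obtain ⟨z1, hz1u, hz1v, hd1, hd2⟩ := h1
  obtain ⟨z2, hz2v, hz2w, hd3, hd4⟩ := h2
  obtain ⟨z, hzz1, hzz2, hzl⟩ := lcs v z1 z2 hz1v hz2v
  have l1 := hz1u.length_le
  have l2 := hz1v.length_le
  have l3 := hz2v.length_le
  have l4 := hz2w.length_le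
  have l5 := hzz1.length_le
  have l6 := hzz2.length_le
  exact ⟨z, hzz1.trans hz1u, hzz2.trans hz2w, by omega, by omega⟩



lemma occ_of_getElem (wl s : List Bool) (i : ℕ) (h : i < (indL wl s).length)
    (hv : (indL wl s)[i] = true) : wl <+: s.drop i := by
  rw [indL_getElem] at hv
  exact List.isPrefixOf_iff_prefix.mp hv

lemma del_one (p : ℕ) (hp : 0 < p) (w : Fin (2*p) → Bool) (hw : NonPeriodic w)
    (a b : List Bool) (c : Bool) :
    Approx 3 2 (indL (List.ofFn w) (a ++ c :: b)) (indL (List.ofFn w) (a ++ b)) := by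
  set wl := List.ofFn w with hwl
  have hwlen : wl.length = 2*p := by simp [hwl]
  set la := a.length with hla
  set q := la + 1 - 2*p with hq
  have hq_le : q ≤ la := by omega
  set s := a ++ c :: b with hs
  set t := a ++ b with ht
  have hslen : s.length = la + 1 + b.length := by simp [hs]; omega
  have htlen : t.length = la + b.length := by simp [ht]; rfl
  set Is := indL wl s with hIs
  set It := indL wl t with hIt
  have hIslen : Is.length = la + 1 + b.length := by rw [hIs, indL_length, hslen]
  have hItlen : It.length = la + b.length := by rw [hIt, indL_length, htlen]
  have hdrop_s : s.drop (la + 1) = b := by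
    rw [hs, show la + 1 = a.length + 1 from rfl, List.drop_append]
    simp
  have hdrop_t : t.drop la = b := by
    rw [ht, hla, List.drop_left]
  have htail_s : Is.drop (la + 1) = indL wl b := by
    rw [hIs, indL_drop, hdrop_s]
  have htail_t : It.drop la = indL wl b := by
    rw [hIt, indL_drop, hdrop_t]
  -- prefix equality
  have hpre : Is.take q = It.take q := by
    apply List.ext_getElem
    · simp [hIslen, hItlen]; omega
    · intro i h1 h2
      have hiq : i < q := by simp [hIslen] at h1; omega
      rw [List.getElem_take, List.getElem_take]
      simp only [hIs, hIt]
      rw [indL_getElem, indL_getElem]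
      apply isPrefixOf_congr
      rw [hwlen]
      have hi2 : i + 2*p ≤ la := by omega
      rw [hs, ht, List.drop_append_of_le_length (by omega),
          List.drop_append_of_le_length (by omega),
          List.take_append_of_le_length (by simp; omega),
          List.take_append_of_le_length (by simp; omega)]
  set Ms := (Is.drop q).take (la + 1 - q) with hMs
  set Mt := (It.drop q).take (la - q) with hMt
  have hMslen : Ms.length = la + 1 - q := by
    rw [hMs]; simp [hIslen]; omega
  have hMtlen : Mt.length = la - q := by
    rw [hMt]; simp [hItlen]; omega
  have hsplit_s : Is = Is.take q ++ (Ms ++ indL wl b) := by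
    rw [hMs, ← htail_s]
    have e1 : (Is.drop q).drop (la + 1 - q) = Is.drop (la + 1) := by
      rw [List.drop_drop]; congr 1; omega
    rw [← e1, List.take_append_drop, List.take_append_drop]
  have hsplit_t : It = It.take q ++ (Mt ++ indL wl b) := by
    rw [hMt, ← htail_t]
    have e1 : (It.drop q).drop (la - q) = It.drop la := by
      rw [List.drop_drop]; congr 1; omega
    rw [← e1, List.take_append_drop, List.take_append_drop]
  -- occurrences
  have hocc_s : ∀ (i : ℕ) (hi : i < Ms.length), Ms[i] = true → wl <+: s.drop (q + i) := by
    intro i hi hv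
    have e : Ms[i]'hi = Is[q+i]'(by rw [hIslen, hMslen] at *; omega) := by
      simp only [hMs]
      rw [List.getElem_take, List.getElem_drop]
    rw [e] at hv
    simp only [hIs] at hv
    exact occ_of_getElem wl s (q+i) _ hv
  have hocc_t : ∀ (i : ℕ) (hi : i < Mt.length), Mt[i] = true → wl <+: t.drop (q + i) := by
    intro i hi hv
    have e : Mt[i]'hi = It[q+i]'(by rw [hItlen, hMtlen] at *; omega) := by
      simp only [hMt]
      rw [List.getElem_take, List.getElem_drop]
    rw [e] at hv
    simp only [hIt] at hv
    exact occ_of_getElem wl t (q+i) _ hv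
  -- counts
  have hcMs : Ms.count true ≤ 2 := by
    apply count_true_le_two p _ (by rw [hMslen]; omega)
    intro i j hi hj hij hvi hvj
    have := spacing p w hw s (q+i) (q+j) (by omega)
      (by rw [hMslen] at hj; omega)
      (by rw [← hwl]; exact hocc_s i hi hvi)
      (by rw [← hwl]; exact hocc_s j hj hvj)
    omega
  have hcMt : Mt.count true ≤ 2 := by
    apply count_true_le_two p _ (by rw [hMtlen]; omega)
    intro i j hi hj hij hvi hvj
    have := spacing p w hw t (q+i) (q+j) (by omega)
      (by rw [hMtlen] at hj; omega)
      (by rw [← hwl]; exact hocc_t i hi hvi)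
      (by rw [← hwl]; exact hocc_t j hj hvj)
    omega
  have hsum_s := count_add Ms
  have hsum_t := count_add Mt
  set r := min (Ms.count false) (Mt.count false) with hr
  have hz1 : (List.replicate r false).Sublist Ms :=
    (List.replicate_sublist_iff).mpr (by omega)
  have hz2 : (List.replicate r false).Sublist Mt :=
    (List.replicate_sublist_iff).mpr (by omega)
  refine ⟨Is.take q ++ (List.replicate r false ++ indL wl b), ?_, ?_, ?_, ?_⟩
  · conv_rhs => rw [hsplit_s]
    exact (List.Sublist.refl _).append (hz1.append (List.Sublist.refl _))
  · rw [hpre]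
    conv_rhs => rw [hsplit_t]
    exact (List.Sublist.refl _).append (hz2.append (List.Sublist.refl _))
  · have hzlen : (Is.take q ++ (List.replicate r false ++ indL wl b)).length
        = q + (r + b.length) := by
      simp [hIslen]
      omega
    rw [hzlen, hIslen]
    omega
  · have hzlen : (Is.take q ++ (List.replicate r false ++ indL wl b)).length
        = q + (r + b.length) := by
      simp [hIslen]
      omega
    rw [hzlen, hItlen]
    omega

lemma sublist_split : ∀ (l z : List Bool), z.Sublist l → z.length < l.length →
    ∃ a c b, l = a ++ c :: b ∧ z.Sublist (a ++ b) := by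
  intro l
  induction l with
  | nil => intro z hz hlen; simp at hlen
  | cons c t ih =>
    intro z hz hlen
    cases hz with
    | cons _ h => exact ⟨[], c, t, rfl, by simpa using h⟩
    | cons_cons _ h =>
      obtain ⟨a', d, b', rfl, hsub⟩ := ih _ h (by simpa using hlen)
      exact ⟨c :: a', d, b', rfl, hsub.cons₂ c⟩

lemma del_many (p : ℕ) (hp : 0 < p) (w : Fin (2*p) → Bool) (hw : NonPeriodic w) :
    ∀ N l z, l.length ≤ N → z.Sublist l →
      Approx (3*(l.length - z.length)) (2*(l.length - z.length))
        (indL (List.ofFn w) l) (indL (List.ofFn w) z) := by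
  intro N
  induction N with
  | zero =>
    intro l z hN hz
    have hl : l = [] := by
      cases l with
      | nil => rfl
      | cons a t => simp at hN
    subst hl
    rw [List.sublist_nil] at hz
    subst hz
    exact ⟨[], by simp [indL]⟩
  | succ N ih =>
    intro l z hN hz
    rcases eq_or_lt_of_le hz.length_le with heq | hlt
    · have hzl : z = l := hz.eq_of_length heq
      subst hzl
      exact ⟨indL (List.ofFn w) z, List.Sublist.refl _, List.Sublist.refl _, by simp, by simp⟩
    · obtain ⟨a, c, b, rfl, hz'⟩ := sublist_split _ _ hz hlt
      have h1 := del_one p hp w hw a b c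
      have h2 := ih (a ++ b) z (by simp at hN ⊢; omega) hz'
      have h3 := approx_trans h1 h2
      have e1 : z.length ≤ (a ++ b).length := hz'.length_le
      refine approx_mono h3 ?_ ?_ <;> simp at e1 ⊢ <;> omega

lemma matches_iff {n ℓ : ℕ} (x : Fin n → Bool) (w : Fin ℓ → Bool) (i : Fin n) :
    matchesAt x w i ↔ List.ofFn w <+: (List.ofFn x).drop i.val := by
  constructor
  · rintro ⟨h, hm⟩
    rw [List.prefix_iff_eq_take]
    apply List.ext_getElem
    · simp; omega
    · intro m h1 h2
      rw [List.getElem_ofFn, List.getElem_take, List.getElem_drop, List.getElem_ofFn]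
      have h1' : m < ℓ := by simpa using h1
      exact (hm ⟨m, h1'⟩).symm
  · intro hpre
    have hlen := hpre.length_le
    rw [List.length_ofFn, List.length_drop, List.length_ofFn] at hlen
    have hin : (i : ℕ) + ℓ ≤ n := by have := i.isLt; omega
    refine ⟨hin, ?_⟩
    intro j
    have hgt := hpre.getElem (i := j.val) (by simp [j.isLt])
    rw [List.getElem_ofFn, List.getElem_drop, List.getElem_ofFn] at hgt
    exact hgt.symm

lemma ofFn_indVec {n ℓ : ℕ} (x : Fin n → Bool) (w : Fin ℓ → Bool) :
    List.ofFn (indVec x w) = indL (List.ofFn w) (List.ofFn x) := by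
  apply List.ext_getElem
  · simp
  · intro i h1 h2
    rw [List.getElem_ofFn, indL_getElem]
    rw [Bool.eq_iff_iff]
    simp only [indVec, decide_eq_true_eq, List.isPrefixOf_iff_prefix]
    exact matches_iff x w ⟨i, by simpa using h1⟩

end Stmt11Aux

open Stmt11Aux in
theorem stmt11 (p k n : ℕ) (hp : 0 < p) (hk : 0 < k)
    (w : Fin (2 * p) → Bool) (hw : NonPeriodic w)
    (x y : Fin n → Bool) (h : inEditBall k x y) :
    inEditBall (5 * k) (indVec y w) (indVec x w) := by
  obtain ⟨z, hzy, hzx, hky, hkx⟩ := h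
  have hy := del_many p hp w hw n (List.ofFn y) z (by simp) hzy
  have hx := del_many p hp w hw n (List.ofFn x) z (by simp) hzx
  simp only [List.length_ofFn] at hy hx
  have hzlen : z.length ≤ n := by simpa using hzy.length_le
  have hy' : Approx (3*k) (2*k) (indL (List.ofFn w) (List.ofFn y)) (indL (List.ofFn w) z) :=
    approx_mono hy (by omega) (by omega)
  have hx' : Approx (2*k) (3*k) (indL (List.ofFn w) z) (indL (List.ofFn w) (List.ofFn x)) :=
    approx_symm (approx_mono hx (by omega) (by omega))
  obtain ⟨z', h1, h2, d1, d2⟩ := approx_trans hy' hx'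
  rw [indL_length, List.length_ofFn] at d1 d2
  refine ⟨z', ?_, ?_, by omega, by omega⟩
  · rw [ofFn_indVec]; exact h2
  · rw [ofFn_indVec]; exact h1
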